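/- Let E = ℝ³ with the Euclidean inner product, let c ∈ E and let r₁ ≥ r₂ > 0. Then there exist u, q ∈ E with ‖u‖ = 1 such that the line {q + tu : t ∈ ℝ} is tangent to both the sphere of radius r₁ centred at 0 and the sphere of radius r₂ centred at c — i.e. ‖q − ⟨q,u⟩u‖ = r₁ and ‖(q−c) − ⟨q−c,u⟩u‖ = r₂ — if and only if ‖c‖ ≥ r₁ − r₂. Equivalently, the set of common tangent lines (and hence the intersection H(S₁) ∩ H(S₂) of the tangent hypersurfaces) is empty if and only if ‖c‖ < r₁ − r₂. -/

import Mathlib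

/-!
Orthogonal projection onto `uᗮ` is linear and 1-Lipschitz, and it maps a line of direction `u`
to a point whose norm is the distance of the line from `0`; hence the distances `r₁`, `r₂` from
`0` and `c` to such a line satisfy `r₁ - r₂ ≤ ‖c‖`.
Conversely, if `r₁ - r₂ ≤ ‖c‖`, rotating a frame whose first vector is `c / ‖c‖` gives an
orthonormal pair `n, u` with `c = (r₁ - r₂) • n + t • u`; the line through `r₁ • n` with
direction `u` is then at distance `r₁` from `0` and `r₂` from `c`.
-/

open scoped RealInnerProductSpace

open Module Real

section

variable {E : Type*} [NormedAddCommGroup E] [InnerProductSpace ℝ E]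

lemma Submodule.starProjection_orthogonal_unit_singleton {u : E} (hu : ‖u‖ = 1) (p : E) :
    (ℝ ∙ u)ᗮ.starProjection p = p - ⟪p, u⟫ • u := by
  rw [starProjection_orthogonal_val, starProjection_unit_singleton ℝ hu, real_inner_comm]

lemma norm_sub_inner_smul_sub_norm_sub_inner_smul_le {u : E} (hu : ‖u‖ = 1) (q c : E) :
    ‖q - ⟪q, u⟫ • u‖ - ‖(q - c) - ⟪q - c, u⟫ • u‖ ≤ ‖c‖ := by
  simp only [← Submodule.starProjection_orthogonal_unit_singleton hu]
  set P := (ℝ ∙ u)ᗮ.starProjection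
  calc ‖P q‖ - ‖P (q - c)‖ ≤ ‖P q - P (q - c)‖ := norm_sub_norm_le _ _
    _ = ‖P c‖ := by rw [← map_sub, sub_sub_cancel]
    _ ≤ ‖c‖ := Submodule.norm_starProjection_apply_le _ _

lemma norm_smul_add_smul_sub_inner_smul {n u : E} (hn : ‖n‖ = 1) (hu : ‖u‖ = 1)
    (hnu : ⟪n, u⟫ = 0) (a b : ℝ) :
    ‖(a • n + b • u) - ⟪a • n + b • u, u⟫ • u‖ = |a| := by
  have : ⟪a • n + b • u, u⟫ = b := by
    simp [inner_add_left, inner_smul_left, hnu, hu]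
  rw [this, add_sub_cancel_right, norm_smul, hn, mul_one, Real.norm_eq_abs]

lemma exists_norm_eq_one_inner_eq_zero (hE : 2 ≤ finrank ℝ E) (v : E) :
    ∃ w : E, ‖w‖ = 1 ∧ ⟪v, w⟫ = 0 := by
  have : FiniteDimensional ℝ E := Module.finite_of_finrank_pos (by omega)
  have hK : (ℝ ∙ v)ᗮ ≠ ⊥ := by
    intro hK
    have h1 := (ℝ ∙ v).finrank_add_finrank_orthogonal
    have h2 : finrank ℝ (ℝ ∙ v) ≤ 1 := by simpa using finrank_span_le_card ({v} : Set E)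
    rw [hK, finrank_bot] at h1
    omega
  obtain ⟨w, hw, hw0⟩ := Submodule.exists_mem_ne_zero_of_ne_bot hK
  refine ⟨‖w‖⁻¹ • w, norm_smul_inv_norm hw0, ?_⟩
  rw [inner_smul_right, Submodule.mem_orthogonal_singleton_iff_inner_right.mp hw, mul_zero]

lemma exists_orthonormal_pair_eq_norm_smul (hE : 2 ≤ finrank ℝ E) (c : E) :
    ∃ e₁ e₂ : E, ‖e₁‖ = 1 ∧ ‖e₂‖ = 1 ∧ ⟪e₁, e₂⟫ = 0 ∧ c = ‖c‖ • e₁ := by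
  obtain ⟨e₁, he₁, hc⟩ : ∃ e₁ : E, ‖e₁‖ = 1 ∧ c = ‖c‖ • e₁ := by
    rcases eq_or_ne c 0 with rfl | hc
    · have : Nontrivial E := Module.nontrivial_of_finrank_pos (R := ℝ) (by omega)
      obtain ⟨e, he⟩ := exists_norm_eq E zero_le_one
      exact ⟨e, he, by simp⟩
    · exact ⟨‖c‖⁻¹ • c, norm_smul_inv_norm hc, by
        rw [smul_smul, mul_inv_cancel₀ (norm_ne_zero_iff.mpr hc), one_smul]⟩
  obtain ⟨e₂, he₂, h₁₂⟩ := exists_norm_eq_one_inner_eq_zero hE e₁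
  exact ⟨e₁, e₂, he₁, he₂, h₁₂, hc⟩

lemma inner_smul_add_smul_smul_add_smul {e₁ e₂ : E} (he₁ : ‖e₁‖ = 1) (he₂ : ‖e₂‖ = 1)
    (h₁₂ : ⟪e₁, e₂⟫ = 0) (a b a' b' : ℝ) :
    ⟪a • e₁ + b • e₂, a' • e₁ + b' • e₂⟫ = a * a' + b * b' := by
  simp only [inner_add_left, inner_add_right, real_inner_smul_left, real_inner_smul_right,
    real_inner_self_eq_norm_sq, he₁, he₂, h₁₂, real_inner_comm e₁ e₂]
  ring

lemma exists_orthonormal_pair_eq_cos_smul_add_sin_smul {e₁ e₂ : E} (he₁ : ‖e₁‖ = 1)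
    (he₂ : ‖e₂‖ = 1) (h₁₂ : ⟪e₁, e₂⟫ = 0) (θ : ℝ) :
    ∃ n u : E, ‖n‖ = 1 ∧ ‖u‖ = 1 ∧ ⟪n, u⟫ = 0 ∧ e₁ = cos θ • n + sin θ • u := by
  have hinner := inner_smul_add_smul_smul_add_smul he₁ he₂ h₁₂
  refine ⟨cos θ • e₁ + (-sin θ) • e₂, sin θ • e₁ + cos θ • e₂, ?_, ?_, ?_, ?_⟩
  · rw [norm_eq_sqrt_real_inner, hinner, ← sqrt_one]
    congr 1
    linear_combination cos_sq_add_sin_sq θ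
  · rw [norm_eq_sqrt_real_inner, hinner, ← sqrt_one]
    congr 1
    linear_combination cos_sq_add_sin_sq θ
  · rw [hinner]
    ring
  · match_scalars
    · linear_combination -cos_sq_add_sin_sq θ
    · ring

lemma exists_eq_mul_cos {r s : ℝ} (hs : |s| ≤ r) : ∃ θ, s = r * cos θ := by
  rcases (abs_nonneg s).trans hs |>.eq_or_lt with rfl | hr
  · exact ⟨0, by simpa using hs⟩
  · have hsr : |s / r| ≤ 1 := by rwa [abs_div, abs_of_pos hr, div_le_one hr]
    obtain ⟨hsr₁, hsr₂⟩ := abs_le.mp hsr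
    exact ⟨arccos (s / r), by rw [cos_arccos hsr₁ hsr₂, mul_div_cancel₀ _ hr.ne']⟩

lemma exists_orthonormal_pair_eq_smul_add_smul (hE : 2 ≤ finrank ℝ E) (c : E) {s : ℝ}
    (hs : |s| ≤ ‖c‖) :
    ∃ n u : E, ∃ t : ℝ, ‖n‖ = 1 ∧ ‖u‖ = 1 ∧ ⟪n, u⟫ = 0 ∧ c = s • n + t • u := by
  obtain ⟨e₁, e₂, he₁, he₂, h₁₂, hc⟩ := exists_orthonormal_pair_eq_norm_smul hE c
  obtain ⟨θ, rfl⟩ := exists_eq_mul_cos hs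
  obtain ⟨n, u, hn, hu, hnu, he₁_eq⟩ :=
    exists_orthonormal_pair_eq_cos_smul_add_sin_smul he₁ he₂ h₁₂ θ
  refine ⟨n, u, ‖c‖ * sin θ, hn, hu, hnu, ?_⟩
  conv_lhs => rw [hc, he₁_eq]
  module

end

/-- There exists a common tangent line to the sphere of radius r₁ centred at 0 and the
sphere of radius r₂ ≤ r₁ centred at c iff ‖c‖ ≥ r₁ − r₂; i.e. the intersection
H(S₁) ∩ H(S₂) of the tangent hypersurfaces is empty iff ‖c‖ < r₁ − r₂. -/
theorem stmt13 (r₁ r₂ : ℝ) (h12 : r₁ ≥ r₂) (h2 : 0 < r₂) (c : EuclideanSpace ℝ (Fin 3)) :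
    (∃ u q : EuclideanSpace ℝ (Fin 3), ‖u‖ = 1 ∧
        ‖q - ⟪q, u⟫ • u‖ = r₁ ∧ ‖(q - c) - ⟪q - c, u⟫ • u‖ = r₂) ↔
      ‖c‖ ≥ r₁ - r₂ := by
  constructor
  · rintro ⟨u, q, hu, hq₁, hq₂⟩
    simpa [hq₁, hq₂] using norm_sub_inner_smul_sub_norm_sub_inner_smul_le hu q c
  · intro hc
    have hE : 2 ≤ finrank ℝ (EuclideanSpace ℝ (Fin 3)) := by simp
    obtain ⟨n, u, t, hn, hu, hnu, rfl⟩ :=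
      exists_orthonormal_pair_eq_smul_add_smul hE c (s := r₁ - r₂)
        (by rwa [abs_of_nonneg (sub_nonneg.mpr h12)])
    refine ⟨u, r₁ • n, hu, ?_, ?_⟩
    · simpa [abs_of_pos (h2.trans_le h12)] using norm_smul_add_smul_sub_inner_smul hn hu hnu r₁ 0
    · rw [show r₁ • n - ((r₁ - r₂) • n + t • u) = r₂ • n + (-t) • u by module,
        norm_smul_add_smul_sub_inner_smul hn hu hnu, abs_of_pos h2]
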